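/- Let G be a finite group of characteristic p and Z ≤ Z(G) a central subgroup. Then the quotient group G/Z is of characteristic p. -/
import Mathlib


variable (p : ℕ) (G : Type*) [Group G]

/-- `O_p(G)`: the join of all normal `p`-subgroups of `G` (the largest normal `p`-subgroup
when `G` is finite). -/
def pCore : Subgroup G :=
  ⨆ H : {H : Subgroup G // H.Normal ∧ IsPGroup p H}, H.1

/-- `O_{p'}(G)`: the join of all normal subgroups of order coprime to `p` (the largest normal
`p'`-subgroup when `G` is finite). -/
def pPrimeCore : Subgroup G :=
  ⨆ H : {H : Subgroup G // H.Normal ∧ Nat.Coprime (Nat.card H) p}, H.1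

lemma iSup_normal {G : Type*} [Group G] {ι : Sort*} (H : ι → Subgroup G)
    (h : ∀ i, (H i).Normal) : (⨆ i, H i).Normal := by
  constructor
  intro n hn g
  refine Subgroup.iSup_induction (C := fun x => g * x * g⁻¹ ∈ ⨆ i, H i) H hn
    (fun i x hx => ?_) ?_ (fun x y hx hy => ?_)
  · exact Subgroup.mem_iSup_of_mem i ((h i).conj_mem x hx g)
  · simpa using Subgroup.one_mem (⨆ i, H i)
  · have e : g * (x * y) * g⁻¹ = (g * x * g⁻¹) * (g * y * g⁻¹) := by group
    show g * (x * y) * g⁻¹ ∈ ⨆ i, H i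
    rw [e]; exact mul_mem hx hy

instance pCore_normal : (pCore p G).Normal := iSup_normal _ (fun i => i.2.1)

instance pPrimeCore_normal : (pPrimeCore p G).Normal := iSup_normal _ (fun i => i.2.1)

/-- A group `G` is of characteristic `p` if `C_G(O_p(G)) ≤ O_p(G)`. -/
def IsCharP : Prop :=
  Subgroup.centralizer ((pCore p G : Subgroup G) : Set G) ≤ pCore p G

/-- A group `G` is almost of characteristic `p` if `G/O_{p'}(G)` is of characteristic `p`. -/
def IsAlmostCharP : Prop := IsCharP p (G ⧸ pPrimeCore p G)

/- ### Auxiliary lemmas -/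


lemma le_pCore' {H : Subgroup G} (hN : H.Normal) (hP : IsPGroup p H) : H ≤ pCore p G :=
  le_iSup (fun H : {H : Subgroup G // H.Normal ∧ IsPGroup p H} => H.1) ⟨H, hN, hP⟩

lemma pCore_isPGroup [Finite G] : IsPGroup p (pCore p G) := by
  haveI : Finite (Subgroup G) :=
    Finite.of_injective (fun H : Subgroup G => (H : Set G)) SetLike.coe_injective
  haveI := Fintype.ofFinite {H : Subgroup G // H.Normal ∧ IsPGroup p H}
  have h : pCore p G =
      (Finset.univ.sup fun H : {H : Subgroup G // H.Normal ∧ IsPGroup p H} => H.1) := by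
    rw [pCore, Finset.sup_eq_iSup]
    exact iSup_congr fun a => by simp
  rw [h]
  exact (Finset.sup_induction (p := fun K : Subgroup G => K.Normal ∧ IsPGroup p K)
    ⟨inferInstance, IsPGroup.of_bot⟩
    (fun a ha b hb => by
      haveI := ha.1; haveI := hb.1
      exact ⟨Subgroup.sup_normal a b, ha.2.to_sup_of_normal_right hb.2⟩)
    (fun i _ => i.2)).2

lemma isPGroup_iff_forall {p : ℕ} {G : Type*} [Group G] {K : Subgroup G} :
    IsPGroup p K ↔ ∀ g ∈ K, ∃ n, g ^ p ^ n = 1 := by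
  constructor
  · intro h g hg
    obtain ⟨n, hn⟩ := h ⟨g, hg⟩
    exact ⟨n, by simpa [Subtype.ext_iff] using hn⟩
  · intro h g
    obtain ⟨n, hn⟩ := h g g.2
    exact ⟨n, by simpa [Subtype.ext_iff] using hn⟩

lemma centralizer_normal {G : Type*} [Group G] (H : Subgroup G) [hH : H.Normal] :
    (Subgroup.centralizer (H : Set G)).Normal := by
  constructor
  intro n hn g
  rw [Subgroup.mem_centralizer_iff] at hn ⊢
  intro h hh
  have h1 : g⁻¹ * h * g ∈ H := by simpa using hH.conj_mem h hh g⁻¹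
  have h2 := hn _ h1
  have : g * (g⁻¹ * h * g * n) * g⁻¹ = g * (n * (g⁻¹ * h * g)) * g⁻¹ := by rw [h2]
  calc h * (g * n * g⁻¹) = g * (g⁻¹ * h * g * n) * g⁻¹ := by group
    _ = g * (n * (g⁻¹ * h * g)) * g⁻¹ := this
    _ = g * n * g⁻¹ * h := by group

/-- If `G` is a finite group of characteristic `p` and `Z ≤ Z(G)`, then `G/Z` is of
characteristic `p`. -/
theorem isCharP_quotient_of_central (p : ℕ) [Fact p.Prime] (G : Type*) [Group G] [Finite G]
    (hG : IsCharP p G) (Z : Subgroup G) [Z.Normal] (hZ : Z ≤ Subgroup.center G) :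
    IsCharP p (G ⧸ Z) := by
  set O := pCore p G with hO
  set π : G →* G ⧸ Z := QuotientGroup.mk' Z with hπdef
  have hπ : Function.Surjective π := QuotientGroup.mk'_surjective Z
  have hZO : Z ≤ O := fun z hz => hG (Subgroup.center_le_centralizer _ (hZ hz))
  have hOp : IsPGroup p O := pCore_isPGroup p G
  have hZp : IsPGroup p Z := hOp.to_le hZO
  have hkerp : IsPGroup p (π.ker) := by
    rw [hπdef, QuotientGroup.ker_mk']; exact hZp
  -- pCore of the quotient is the image of O
  have hQ : pCore p (G ⧸ Z) = O.map π := by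
    apply le_antisymm
    · have hKp : IsPGroup p ((pCore p (G ⧸ Z)).comap π) :=
        (pCore_isPGroup p (G ⧸ Z)).comap_of_ker_isPGroup π hkerp
      haveI : ((pCore p (G ⧸ Z)).comap π).Normal := (pCore_normal p (G ⧸ Z)).comap π
      have hKO : (pCore p (G ⧸ Z)).comap π ≤ O := le_pCore' p G inferInstance hKp
      calc pCore p (G ⧸ Z) = ((pCore p (G ⧸ Z)).comap π).map π :=
            (Subgroup.map_comap_eq_self_of_surjective hπ _).symm
        _ ≤ O.map π := Subgroup.map_mono hKO
    · exact le_pCore' p (G ⧸ Z) ((pCore_normal p G).map π hπ) (hOp.map π)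
  -- the preimage of the centralizer
  set D : Subgroup G := (Subgroup.centralizer ((pCore p (G ⧸ Z) : Subgroup (G ⧸ Z)) : Set (G ⧸ Z))).comap π with hD
  haveI : (Subgroup.centralizer ((pCore p (G ⧸ Z) : Subgroup (G ⧸ Z)) : Set (G ⧸ Z))).Normal :=
    centralizer_normal _
  haveI hDn : D.Normal := Subgroup.Normal.comap inferInstance π
  have hDp : IsPGroup p D := by
    rw [isPGroup_iff_forall]
    intro a ha
    rw [hD, Subgroup.mem_comap, Subgroup.mem_centralizer_iff] at ha
    -- commutators of a with O lie in Z, hence are central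
    have hcomm : ∀ x ∈ O, a * x * a⁻¹ * x⁻¹ ∈ Z := by
      intro x hx
      have hπx : π x ∈ pCore p (G ⧸ Z) := by
        rw [hQ]; exact ⟨x, hx, rfl⟩
      have hc := ha (π x) hπx
      have : π (a * x * a⁻¹ * x⁻¹) = 1 := by
        rw [map_mul, map_mul, map_mul, map_inv, map_inv, ← hc]
        group
      rwa [hπdef, ← MonoidHom.mem_ker, QuotientGroup.ker_mk'] at this
    have hpow : ∀ (k : ℕ), ∀ x ∈ O, a ^ k * x * (a ^ k)⁻¹ * x⁻¹ = (a * x * a⁻¹ * x⁻¹) ^ k := by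
      intro k
      induction k with
      | zero => intro x hx; simp
      | succ k ih =>
        intro x hx
        have hck : a ^ k * x * (a ^ k)⁻¹ = (a * x * a⁻¹ * x⁻¹) ^ k * x := by
          rw [← ih x hx]; group
        have hcent : ∀ y : G, y * (a * x * a⁻¹ * x⁻¹) ^ k = (a * x * a⁻¹ * x⁻¹) ^ k * y := by
          intro y
          have : (a * x * a⁻¹ * x⁻¹) ^ k ∈ Subgroup.center G :=
            hZ (pow_mem (hcomm x hx) k)
          exact Subgroup.mem_center_iff.mp this y
        calc a ^ (k + 1) * x * (a ^ (k + 1))⁻¹ * x⁻¹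
            = a * (a ^ k * x * (a ^ k)⁻¹) * a⁻¹ * x⁻¹ := by
              rw [pow_succ']; group
          _ = a * ((a * x * a⁻¹ * x⁻¹) ^ k * x) * a⁻¹ * x⁻¹ := by rw [hck]
          _ = (a * (a * x * a⁻¹ * x⁻¹) ^ k) * (x * a⁻¹ * x⁻¹) := by group
          _ = ((a * x * a⁻¹ * x⁻¹) ^ k * a) * (x * a⁻¹ * x⁻¹) := by rw [hcent a]
          _ = (a * x * a⁻¹ * x⁻¹) ^ k * (a * x * a⁻¹ * x⁻¹) := by group
          _ = (a * x * a⁻¹ * x⁻¹) ^ (k + 1) := by rw [pow_succ]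
    -- the card of Z is a power of p
    obtain ⟨n, hn⟩ := IsPGroup.iff_card.mp hZp
    have h1 : a ^ p ^ n ∈ Subgroup.centralizer ((O : Subgroup G) : Set G) := by
      rw [Subgroup.mem_centralizer_iff]
      intro x hx
      have h2 : a ^ p ^ n * x * (a ^ p ^ n)⁻¹ * x⁻¹ = 1 := by
        rw [hpow (p ^ n) x hx]
        have hmem : a * x * a⁻¹ * x⁻¹ ∈ Z := hcomm x hx
        have : (⟨a * x * a⁻¹ * x⁻¹, hmem⟩ : Z) ^ p ^ n = 1 := by
          rw [← hn]; exact pow_card_eq_one'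
        simpa [Subtype.ext_iff] using this
      have h3 : a ^ p ^ n * x * (a ^ p ^ n)⁻¹ = x := by
        rwa [mul_inv_eq_one] at h2
      rw [mul_inv_eq_iff_eq_mul] at h3
      rw [h3]
    have h4 : a ^ p ^ n ∈ O := hG h1
    obtain ⟨m, hm⟩ := isPGroup_iff_forall.mp hOp _ h4
    exact ⟨n + m, by rw [pow_add, pow_mul]; exact hm⟩
  have hDO : D ≤ O := le_pCore' p G hDn hDp
  intro x hx
  obtain ⟨g, rfl⟩ := hπ x
  rw [hQ]
  exact ⟨g, hDO (Subgroup.mem_comap.mpr hx), rfl⟩
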